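/- arXiv:2203.14562 — 5 statements merged into one kernel-verified Lean document; each statement's English description precedes it below -/
import Mathlib

section
/- For a traceless symmetric 3×3 real matrix h that is transversely isotropic (i.e., has at least two equal eigenvalues), the deviatoric part of h² equals (tr h³ / tr h²)·h, provided tr h² ≠ 0. -/
open Matrix Polynomial

lemma charpoly_unitary_conj {n : Type*} [Fintype n] [DecidableEq n]
    (U : Matrix.unitaryGroup n ℝ) (D : Matrix n n ℝ) :
    ((U : Matrix n n ℝ) * D * star (U : Matrix n n ℝ)).charpoly = D.charpoly := by
  set Uc := (C : ℝ →+* Polynomial ℝ).mapMatrix (U : Matrix n n ℝ) with hUc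
  set Vc := (C : ℝ →+* Polynomial ℝ).mapMatrix (star (U : Matrix n n ℝ)) with hVc
  have hUV : Uc * Vc = 1 := by
    rw [hUc, hVc, ← _root_.map_mul _ _ _, (Matrix.mem_unitaryGroup_iff).mp U.2, _root_.map_one]
  have key : charmatrix ((U : Matrix n n ℝ) * D * star (U : Matrix n n ℝ))
      = Uc * charmatrix D * Vc := by
    unfold charmatrix
    rw [_root_.map_mul, _root_.map_mul, mul_sub, sub_mul]
    congr 1
    rw [← (Matrix.scalar_commute X (Commute.all X) Uc).eq, mul_assoc, hUV, mul_one]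
  rw [Matrix.charpoly, Matrix.charpoly, key, det_mul, det_mul,
    mul_comm Uc.det, mul_assoc, ← det_mul, hUV, det_one, mul_one]

lemma charpoly_diagonal' {n : Type*} [Fintype n] [DecidableEq n] (d : n → ℝ) :
    (Matrix.diagonal d).charpoly = ∏ i, (X - C (d i)) := by
  rw [Matrix.charpoly]
  have : charmatrix (Matrix.diagonal d) = Matrix.diagonal (fun i => X - C (d i)) := by
    refine Matrix.ext fun i j => ?_
    by_cases hij : i = j
    · subst hij; rw [charmatrix_apply_eq, Matrix.diagonal_apply_eq d i]; exact (Matrix.diagonal_apply_eq (fun i => (X : Polynomial ℝ) - C (d i)) i).symm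
    · rw [charmatrix_apply_ne _ _ _ hij, Matrix.diagonal_apply_ne _ hij,
        Matrix.diagonal_apply_ne _ hij, _root_.map_zero, neg_zero]
  rw [this, det_diagonal]

lemma fin3_third (μ : Fin 3 → ℝ) (i j k : Fin 3) (hij : i ≠ j)
    (hsum : μ 0 + μ 1 + μ 2 = 0) (hki : k ≠ i) (hkj : k ≠ j) :
    μ k = -(μ i + μ j) := by
  fin_cases i <;> fin_cases j <;> fin_cases k <;> simp_all <;> linarith

/-- For a traceless symmetric 3×3 real matrix `h` that is transversely
isotropic (its characteristic polynomial has a repeated root), with `h ≠ 0` and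
`tr h² ≠ 0`, the deviatoric part of `h²` equals `(tr h³ / tr h²) • h`. -/
theorem deviator_sq_of_transversely_isotropic
    (h : Matrix (Fin 3) (Fin 3) ℝ) (hsym : h.IsSymm)
    (htr : h.trace = 0) (hne : h ≠ 0)
    (hrep : ∃ x : ℝ, 2 ≤ h.charpoly.rootMultiplicity x)
    (htr2 : (h ^ 2).trace ≠ 0) :
    h ^ 2 - ((h ^ 2).trace / 3) • (1 : Matrix (Fin 3) (Fin 3) ℝ)
      = ((h ^ 3).trace / (h ^ 2).trace) • h := by
  classical
  have hH : h.IsHermitian := by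
    show hᴴ = h
    refine Matrix.ext fun i j => ?_
    simpa [Matrix.conjTranspose_apply] using hsym.apply i j
  obtain ⟨x, hx⟩ := hrep
  set μ : Fin 3 → ℝ := hH.eigenvalues with hμ
  set U := hH.eigenvectorUnitary with hU
  set D : Matrix (Fin 3) (Fin 3) ℝ := Matrix.diagonal μ with hD
  have spec : h = (U : Matrix (Fin 3) (Fin 3) ℝ) * D * star (U : Matrix (Fin 3) (Fin 3) ℝ) := by
    have := hH.spectral_theorem
    simpa [hD, hμ, hU, Function.comp] using this
  have hVU : star (U : Matrix (Fin 3) (Fin 3) ℝ) * (U : Matrix (Fin 3) (Fin 3) ℝ) = 1 :=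
    (Matrix.mem_unitaryGroup_iff').mp U.2
  have hUV : (U : Matrix (Fin 3) (Fin 3) ℝ) * star (U : Matrix (Fin 3) (Fin 3) ℝ) = 1 :=
    (Matrix.mem_unitaryGroup_iff).mp U.2
  have conj_mul : ∀ A B : Matrix (Fin 3) (Fin 3) ℝ,
      ((U : Matrix (Fin 3) (Fin 3) ℝ) * A * star (U : Matrix (Fin 3) (Fin 3) ℝ))
        * ((U : Matrix (Fin 3) (Fin 3) ℝ) * B * star (U : Matrix (Fin 3) (Fin 3) ℝ))
      = (U : Matrix (Fin 3) (Fin 3) ℝ) * (A * B) * star (U : Matrix (Fin 3) (Fin 3) ℝ) := by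
    intro A B
    simp only [mul_assoc]
    rw [← mul_assoc (star (U : Matrix (Fin 3) (Fin 3) ℝ)), hVU, one_mul]
  -- charpoly
  have hcp : h.charpoly = ∏ i, (X - C (μ i)) := by
    rw [spec, charpoly_unitary_conj, hD, charpoly_diagonal']
  -- two equal eigenvalues equal to x
  have hcount : 2 ≤ (Finset.univ.filter (fun i => μ i = x)).card := by
    have hroots : (∏ i, (X - C (μ i))).roots = Finset.univ.val.map μ := by
      have : (∏ i, (X - C (μ i)))
          = ((Finset.univ.val.map μ).map (fun a : ℝ => X - C a)).prod := by
        rw [Multiset.map_map]; rfl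
      rw [this, roots_multiset_prod_X_sub_C]
    have h2 := hx
    rw [hcp, ← Polynomial.count_roots, hroots, Multiset.count_map] at h2
    simpa [Finset.card, Finset.filter, eq_comm] using h2
  obtain ⟨i, hi, j, hj, hij⟩ := Finset.one_lt_card.mp
    (by omega : 1 < (Finset.univ.filter (fun i => μ i = x)).card)
  rw [Finset.mem_filter] at hi hj
  -- traces
  have tr1 : Matrix.trace h = ∑ k, μ k := by
    rw [spec, Matrix.trace_mul_cycle, hVU, one_mul, hD, Matrix.trace_diagonal]
  have hsq : h ^ 2 = (U : Matrix (Fin 3) (Fin 3) ℝ) * (D * D) * star (U : Matrix (Fin 3) (Fin 3) ℝ) := by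
    rw [pow_two]
    conv_lhs => rw [spec]
    exact conj_mul D D
  have hcb : h ^ 3 = (U : Matrix (Fin 3) (Fin 3) ℝ) * (D * D * D) * star (U : Matrix (Fin 3) (Fin 3) ℝ) := by
    rw [pow_succ, hsq]
    conv_lhs => rw [spec]
    exact conj_mul (D * D) D
  have tr2 : (h ^ 2).trace = ∑ k, μ k ^ 2 := by
    rw [hsq, Matrix.trace_mul_cycle, hVU, one_mul, hD,
      Matrix.diagonal_mul_diagonal, Matrix.trace_diagonal]
    refine Finset.sum_congr rfl fun k _ => ?_; ring
  have tr3 : (h ^ 3).trace = ∑ k, μ k ^ 3 := by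
    rw [hcb, Matrix.trace_mul_cycle, hVU, one_mul, hD,
      Matrix.diagonal_mul_diagonal, Matrix.diagonal_mul_diagonal, Matrix.trace_diagonal]
    refine Finset.sum_congr rfl fun k _ => ?_; ring
  rw [tr1, Fin.sum_univ_three] at htr
  -- every eigenvalue is x or -2x
  have key : ∀ k, μ k = x ∨ μ k = -(2*x) := by
    intro k
    by_cases hki : k = i
    · exact Or.inl (hki ▸ hi.2)
    by_cases hkj : k = j
    · exact Or.inl (hkj ▸ hj.2)
    right
    have := fin3_third μ i j k hij htr hki hkj
    rw [hi.2, hj.2] at this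
    rw [this]; ring
  -- x ≠ 0
  have hx0 : x ≠ 0 := by
    intro h0
    apply htr2
    rw [tr2]
    refine Finset.sum_eq_zero fun k _ => ?_
    rcases key k with hk | hk <;> rw [hk, h0] <;> ring
  -- trace values
  have c2 : (h ^ 2).trace = 6 * x ^ 2 := by
    rw [tr2, Fin.sum_univ_three]
    rcases key 0 with h0 | h0 <;> rcases key 1 with h1 | h1 <;> rcases key 2 with h2 | h2 <;>
      rw [h0, h1, h2] at htr ⊢ <;>
      first
        | ring1
        | (exfalso; apply hx0; linarith)
  have c3 : (h ^ 3).trace = -(6 * x ^ 3) := by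
    rw [tr3, Fin.sum_univ_three]
    rcases key 0 with h0 | h0 <;> rcases key 1 with h1 | h1 <;> rcases key 2 with h2 | h2 <;>
      rw [h0, h1, h2] at htr ⊢ <;>
      first
        | ring1
        | (exfalso; apply hx0; linarith)
  -- matrix identity
  have hDD : D * D = (-x) • D + (2 * x ^ 2) • (1 : Matrix (Fin 3) (Fin 3) ℝ) := by
    rw [hD, Matrix.diagonal_mul_diagonal]
    refine Matrix.ext fun a b => ?_
    by_cases hab : a = b
    · subst hab
      simp only [Matrix.diagonal_apply_eq, Matrix.add_apply, Matrix.smul_apply,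
        Matrix.one_apply_eq, smul_eq_mul, mul_one]
      rcases key a with hk | hk <;> rw [hk] <;> ring
    · simp [Matrix.diagonal_apply_ne _ hab, Matrix.one_apply_ne hab]
  have A2 : h ^ 2 = (-x) • h + (2 * x ^ 2) • (1 : Matrix (Fin 3) (Fin 3) ℝ) := by
    rw [hsq, hDD, Matrix.mul_add, Matrix.add_mul, Matrix.mul_smul, Matrix.smul_mul,
      Matrix.mul_smul, Matrix.smul_mul, mul_one, hUV, ← spec]
  have e1 : 6 * x ^ 2 / 3 = 2 * x ^ 2 := by ring
  have e2 : -(6 * x ^ 3) / (6 * x ^ 2) = -x := by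
    field_simp
  rw [c2, c3, A2, e1, e2, add_sub_cancel_right]
end

section
/- The gradient of g(h) = (tr h²)³ − 6(tr h³)² on the space of traceless symmetric 3×3 matrices, which equals 6((tr h²)²·h − 6(tr h³)·(h²)'), vanishes at every h with g(h) = 0. -/
/-!
For traceless `3 × 3` matrices `2 tr h⁴ = (tr h²)²`. Expanding the square of the gradient `G`,
a quadratic polynomial in `h`, with this identity gives `tr G² = 36 (tr h²)² g(h)`. So `g(h) = 0`
forces `tr (Gᵀ G) = tr G² = 0` for the symmetric matrix `G`, hence `G = 0`.
-/

namespace Matrix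

theorem two_mul_trace_pow_four_of_trace_eq_zero {R : Type*} [CommRing R]
    (A : Matrix (Fin 3) (Fin 3) R) (hA : A.trace = 0) :
    2 * (A ^ 4).trace = (A ^ 2).trace ^ 2 := by
  have h22 : A 2 2 = -(A 0 0 + A 1 1) := by
    rw [trace_fin_three] at hA
    linear_combination hA
  simp only [pow_succ, pow_zero, one_mul, trace_fin_three, mul_apply, Fin.sum_univ_three, h22]
  ring

theorem IsSymm.eq_zero_of_trace_sq_eq_zero {n R : Type*} [Fintype n] [DecidableEq n]
    [CommRing R] [PartialOrder R] [StarRing R] [TrivialStar R] [StarOrderedRing R]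
    [NoZeroDivisors R] {A : Matrix n n R} (hA : A.IsSymm) (h : (A ^ 2).trace = 0) : A = 0 := by
  rwa [← trace_conjTranspose_mul_self_eq_zero_iff, conjTranspose_eq_transpose_of_trivial, hA.eq,
    ← sq]

end Matrix

theorem sq_smul_sub_smul_sq_sub_smul_one {R A : Type*} [CommRing R] [Ring A] [Algebra R A]
    (x : A) (a b c : R) :
    (a • x - b • (x ^ 2 - c • 1)) ^ 2 = (a ^ 2 - 2 * b ^ 2 * c) • x ^ 2 + b ^ 2 • x ^ 4
      - (2 * a * b) • x ^ 3 + (2 * a * b * c) • x + (b * c) ^ 2 • 1 := by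
  simp only [pow_succ, pow_zero, one_mul, sub_mul, mul_sub, mul_smul_comm, smul_mul_assoc,
    mul_one, mul_assoc]
  module

namespace Matrix

variable {K : Type*} [Field K]

/-- For traceless `h` this is twice the discriminant of the characteristic polynomial of `h`. -/
def discriminantForm (h : Matrix (Fin 3) (Fin 3) K) : K :=
  (h ^ 2).trace ^ 3 - 6 * (h ^ 3).trace ^ 2

def discriminantFormGrad (h : Matrix (Fin 3) (Fin 3) K) : Matrix (Fin 3) (Fin 3) K :=
  (6 : K) • ((h ^ 2).trace ^ 2 • h - (6 * (h ^ 3).trace) • (h ^ 2 - ((h ^ 2).trace / 3) • 1))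

theorem IsSymm.discriminantFormGrad {h : Matrix (Fin 3) (Fin 3) K} (hh : h.IsSymm) :
    h.discriminantFormGrad.IsSymm :=
  ((hh.smul _).sub (((hh.pow 2).sub (isSymm_one.smul _)).smul _)).smul _

theorem trace_discriminantFormGrad_sq [CharZero K] {h : Matrix (Fin 3) (Fin 3) K} (htr : h.trace = 0) :
    (h.discriminantFormGrad ^ 2).trace = 36 * (h ^ 2).trace ^ 2 * h.discriminantForm := by
  have h4 := two_mul_trace_pow_four_of_trace_eq_zero h htr
  rw [discriminantFormGrad, discriminantForm, smul_pow, sq_smul_sub_smul_sq_sub_smul_one]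
  simp only [trace_smul, trace_add, trace_sub, trace_one, htr, Fintype.card_fin, smul_eq_mul]
  linear_combination 648 * (h ^ 3).trace ^ 2 * h4

end Matrix

/-- The gradient `6((tr h²)²·h − 6(tr h³)·(h²)')` of
`g(h) = (tr h²)³ − 6(tr h³)²` on traceless symmetric 3×3 matrices vanishes at
every `h` with `g(h) = 0`. -/
theorem gradient_vanishes_on_zero_set
    (h : Matrix (Fin 3) (Fin 3) ℝ) (hsym : h.IsSymm) (htr : h.trace = 0)
    (hg : ((h ^ 2).trace) ^ 3 - 6 * ((h ^ 3).trace) ^ 2 = 0) :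
    (6 : ℝ) • (((h ^ 2).trace) ^ 2 • h -
      (6 * (h ^ 3).trace) •
        (h ^ 2 - ((h ^ 2).trace / 3) • (1 : Matrix (Fin 3) (Fin 3) ℝ)))
      = 0 := by
  have htrace : (h.discriminantFormGrad ^ 2).trace = 0 := by
    rw [Matrix.trace_discriminantFormGrad_sq htr, Matrix.discriminantForm, hg, mul_zero]
  exact hsym.discriminantFormGrad.eq_zero_of_trace_sq_eq_zero htrace
end

section
/- A traceless symmetric 3×3 real matrix h satisfies (tr h²)³ = 6(tr h³)² if and only if h has at least two equal eigenvalues. -/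
open Polynomial Matrix

/-- Characteristic polynomial is invariant under conjugation. -/
lemma charpoly_conj_aux {n R : Type*} [Fintype n] [DecidableEq n] [CommRing R]
    (U M V : Matrix n n R) (hUV : U * V = 1) :
    (U * M * V).charpoly = M.charpoly := by
  have hmapUV : U.map (C : R → R[X]) * V.map C = 1 := by
    rw [← Matrix.map_mul, hUV, Matrix.map_one _ (map_zero C) (map_one C)]
  have key : charmatrix (U * M * V) = U.map C * charmatrix M * V.map C := by
    rw [charmatrix, charmatrix, mul_sub, sub_mul]
    congr 1
    · rw [(Matrix.scalar_commute (X : R[X]) (Commute.all X) (U.map C)).symm.eq,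
        mul_assoc, hmapUV, mul_one]
    · simp only [RingHom.mapMatrix_apply, Matrix.map_mul]
  rw [Matrix.charpoly, Matrix.charpoly, key, det_mul, det_mul]
  calc (U.map (C : R → R[X])).det * (charmatrix M).det * (V.map C).det
      = (charmatrix M).det * ((U.map C).det * (V.map C).det) := by ring
    _ = (charmatrix M).det := by rw [← det_mul, hmapUV, det_one, mul_one]

/-- A traceless symmetric 3×3 real matrix `h` satisfies
`(tr h²)³ = 6 (tr h³)²` iff its characteristic polynomial has a repeated root
(i.e. `h` has at least two equal eigenvalues). -/
theorem traceIdentity_iff_repeated_eigenvalue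
    (h : Matrix (Fin 3) (Fin 3) ℝ) (hsym : h.IsSymm) (htr : h.trace = 0) :
    ((h ^ 2).trace) ^ 3 = 6 * ((h ^ 3).trace) ^ 2 ↔
      ∃ x : ℝ, 2 ≤ h.charpoly.rootMultiplicity x := by
  have hherm : h.IsHermitian := by
    simpa [Matrix.IsHermitian, Matrix.conjTranspose_eq_transpose_of_trivial] using hsym.eq
  set ev : Fin 3 → ℝ := hherm.eigenvalues with hev
  set V : Matrix (Fin 3) (Fin 3) ℝ := (hherm.eigenvectorUnitary : Matrix (Fin 3) (Fin 3) ℝ)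
    with hVdef
  set D : Matrix (Fin 3) (Fin 3) ℝ := Matrix.diagonal ev with hDdef
  have hV1 : star V * V = 1 :=
    (Matrix.mem_unitaryGroup_iff').mp (hherm.eigenvectorUnitary).2
  have hV2 : V * star V = 1 :=
    (Matrix.mem_unitaryGroup_iff).mp (hherm.eigenvectorUnitary).2
  have hD : h = V * D * star V := by
    have := hherm.spectral_theorem
    simpa [hDdef, hVdef] using this
  -- powers
  have hcancel : ∀ X : Matrix (Fin 3) (Fin 3) ℝ, star V * (V * X) = X := by
    intro X; rw [← mul_assoc, hV1, one_mul]
  have h2 : h ^ 2 = V * D ^ 2 * star V := by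
    rw [hD, pow_two, pow_two]
    simp only [mul_assoc, hcancel]
  have h3 : h ^ 3 = V * D ^ 3 * star V := by
    rw [hD, pow_succ, pow_two, pow_succ, pow_two]
    simp only [mul_assoc, hcancel]
  have htraceconj : ∀ X : Matrix (Fin 3) (Fin 3) ℝ, (V * X * star V).trace = X.trace := by
    intro X
    rw [Matrix.trace_mul_comm, ← mul_assoc, hV1, one_mul]
  set a := ev 0 with ha
  set b := ev 1 with hb
  set c := ev 2 with hc
  have htrD : ∀ k : ℕ, (D ^ k).trace = a ^ k + b ^ k + c ^ k := by
    intro k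
    rw [hDdef, Matrix.diagonal_pow, Matrix.trace_diagonal, Fin.sum_univ_three]
    rfl
  have ht1 : a + b + c = 0 := by
    have := htraceconj D
    rw [← hD] at this
    rw [htr] at this
    have := this.symm
    rw [hDdef, Matrix.trace_diagonal, Fin.sum_univ_three] at this
    linarith [this]
  have ht2 : (h ^ 2).trace = a ^ 2 + b ^ 2 + c ^ 2 := by
    rw [h2, htraceconj, htrD]
  have ht3 : (h ^ 3).trace = a ^ 3 + b ^ 3 + c ^ 3 := by
    rw [h3, htraceconj, htrD]
  -- the charpoly
  have hcp : h.charpoly = ((({a, b, c} : Multiset ℝ)).map fun x => X - C x).prod := by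
    have hconj : h.charpoly = D.charpoly := by
      rw [hD]; exact charpoly_conj_aux V D (star V) hV2
    rw [hconj, Matrix.charpoly_of_upperTriangular D (Matrix.blockTriangular_diagonal ev),
      Fin.prod_univ_three]
    simp [hDdef, Multiset.insert_eq_cons, mul_assoc]
    rfl
  have hroots : h.charpoly.roots = ({a, b, c} : Multiset ℝ) := by
    rw [hcp, Polynomial.roots_multiset_prod_X_sub_C]
  -- repeated root iff two eigenvalues equal
  have hrm : (∃ x : ℝ, 2 ≤ h.charpoly.rootMultiplicity x) ↔ (a = b ∨ a = c ∨ b = c) := by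
    constructor
    · rintro ⟨x, hx⟩
      rw [← Polynomial.count_roots, hroots] at hx
      by_contra hcon
      push_neg at hcon
      obtain ⟨hab, hac, hbc⟩ := hcon
      have hnd : ({a, b, c} : Multiset ℝ).Nodup := by
        simp [Multiset.insert_eq_cons, Multiset.nodup_cons, hab, hac, hbc]
      have := Multiset.nodup_iff_count_le_one.mp hnd x
      omega
    · intro hab
      rcases hab with hab | hac | hbc
      · refine ⟨a, ?_⟩
        rw [← Polynomial.count_roots, hroots, hab]
        simp [Multiset.insert_eq_cons, Multiset.count_cons]
      · refine ⟨a, ?_⟩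
        rw [← Polynomial.count_roots, hroots, hac]
        simp [Multiset.insert_eq_cons, Multiset.count_cons, Multiset.count_singleton]
      · refine ⟨b, ?_⟩
        rw [← Polynomial.count_roots, hroots, hbc]
        simp [Multiset.insert_eq_cons, Multiset.count_cons, Multiset.count_singleton]
  rw [ht2, ht3, hrm]
  -- final algebra
  have key : (a ^ 2 + b ^ 2 + c ^ 2) ^ 3 - 6 * (a ^ 3 + b ^ 3 + c ^ 3) ^ 2
      = 2 * ((a - b) * (b - c) * (a - c)) ^ 2 := by
    have hc' : c = -a - b := by linarith
    rw [hc']; ring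
  constructor
  · intro heq
    have : ((a - b) * (b - c) * (a - c)) ^ 2 = 0 := by linarith [key]
    have := pow_eq_zero_iff (n := 2) (by norm_num) |>.mp this
    rcases mul_eq_zero.mp this with h' | h'
    · rcases mul_eq_zero.mp h' with h'' | h''
      · left; linarith
      · right; right; linarith
    · right; left; linarith
  · intro hor
    have : (a - b) * (b - c) * (a - c) = 0 := by
      rcases hor with h' | h' | h' <;>
        simp [sub_eq_zero.mpr h', mul_comm, mul_assoc]
    nlinarith [key, this]
end

section
/- For any traceless symmetric 3×3 real matrix h with eigenvalues a, b, c (so a+b+c=0), one has (tr h²)³ − 6(tr h³)² = (a−b)²(b−c)²(c−a)²·K for the explicit nonnegative combination, and in particular (tr h²)³ ≥ 6(tr h³)². -/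
open Polynomial

namespace Matrix.IsHermitian

variable {𝕜 n : Type*} [RCLike 𝕜] [Fintype n] [DecidableEq n] {A : Matrix n n 𝕜}

theorem trace_pow_eq_sum_eigenvalues_pow (hA : A.IsHermitian) (k : ℕ) :
    (A ^ k).trace = ∑ i, (hA.eigenvalues i : 𝕜) ^ k := by
  conv_lhs => rw [hA.spectral_theorem]
  rw [← map_pow, Unitary.conjStarAlgAut_apply, trace_mul_cycle, Unitary.coe_star_mul_self,
    one_mul, diagonal_pow, trace_diagonal]
  rfl

theorem trace_pow_eq_sum_roots_charpoly_pow (hA : A.IsHermitian) (k : ℕ) :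
    (A ^ k).trace = (A.charpoly.roots.map (· ^ k)).sum := by
  simp [hA.trace_pow_eq_sum_eigenvalues_pow, hA.roots_charpoly_eq_eigenvalues]

end Matrix.IsHermitian

theorem sum_sq_pow_three_sub_six_mul_sum_cube_sq {R : Type*} [CommRing R] {a b c : R}
    (h : a + b + c = 0) :
    (a ^ 2 + b ^ 2 + c ^ 2) ^ 3 - 6 * (a ^ 3 + b ^ 3 + c ^ 3) ^ 2
      = 2 * ((a - b) * (b - c) * (c - a)) ^ 2 := by
  rw [eq_neg_add_of_add_eq h]
  ring

theorem trace_discriminant_identity_general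
    (h : Matrix (Fin 3) (Fin 3) ℝ) (hsym : h.IsSymm)
    (a b c : ℝ)
    (hcp : h.charpoly = (X - C a) * (X - C b) * (X - C c))
    (hsum : a + b + c = 0) :
    ((h ^ 2).trace) ^ 3 - 6 * ((h ^ 3).trace) ^ 2
        = 2 * ((a - b) * (b - c) * (c - a)) ^ 2 ∧
      6 * ((h ^ 3).trace) ^ 2 ≤ ((h ^ 2).trace) ^ 3 := by
  have trace_pow (k : ℕ) : (h ^ k).trace = a ^ k + b ^ k + c ^ k := by
    rw [(Matrix.isHermitian_iff_isSymm.mpr hsym).trace_pow_eq_sum_roots_charpoly_pow, hcp]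
    simp [roots_mul, X_sub_C_ne_zero, add_assoc]
  have identity := sum_sq_pow_three_sub_six_mul_sum_cube_sq hsum
  rw [trace_pow, trace_pow]
  exact ⟨identity, sub_nonneg.mp (identity ▸ by positivity)⟩

/-- For a traceless symmetric 3×3 matrix `h` with eigenvalues
`a, b, c` (so `a + b + c = 0`), one has
`(tr h²)³ − 6(tr h³)² = 2·(a−b)²(b−c)²(c−a)²`, and in particular
`(tr h²)³ ≥ 6(tr h³)²`. -/
theorem trace_discriminant_identity
    (h : Matrix (Fin 3) (Fin 3) ℝ) (hsym : h.IsSymm) (htr : h.trace = 0)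
    (a b c : ℝ)
    (hcp : h.charpoly = (X - C a) * (X - C b) * (X - C c))
    (hsum : a + b + c = 0) :
    ((h ^ 2).trace) ^ 3 - 6 * ((h ^ 3).trace) ^ 2
        = 2 * ((a - b) * (b - c) * (c - a)) ^ 2 ∧
      6 * ((h ^ 3).trace) ^ 2 ≤ ((h ^ 2).trace) ^ 3 :=
  trace_discriminant_identity_general h hsym a b c hcp hsum
end

section
/- For an elasticity tensor E with harmonic decomposition E = (λ, μ, d', v', H), the squared Euclidean norm decomposes as ‖E‖² = 3(3λ² + 4λμ + 8μ²) + (2/21)‖d' + 2v'‖² + (4/3)‖d' − v'‖² + ‖H‖². -/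
/-- Kronecker delta on `Fin 3`. -/
def kd (i j : Fin 3) : ℝ := if i = j then 1 else 0

/-!
Symmetrization is an orthogonal projection, so `‖E‖² = ‖E^s‖² + ‖E - E^s‖²`.
The harmonic part `H` is totally symmetric and traceless, and for totally symmetric `T` one has
`⟨T, Id ⊙ A⟩ = ⟨tr₁₂ T, A⟩`; hence `H`, `Id ⊙ Id` and `Id ⊙ (d' + 2v')` are mutually orthogonal,
with `‖Id ⊙ Id‖² = 5` and `‖Id ⊙ A'‖² = (7/6)‖A'‖²`. This gives
`‖E^s‖² = 5(2μ + λ)² + (2/21)‖d' + 2v'‖² + ‖H‖²`. In dimension 3 the remaining part `E - E^s` is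
determined by `d - v`, with `‖E - E^s‖² = (4/3)‖d' - v'‖² + 4(λ - μ)²`, and
`3(3λ² + 4λμ + 8μ²) = 5(2μ + λ)² + 4(λ - μ)²`.
-/

open Finset

noncomputable section

namespace HarmonicDecomposition

variable {ι : Type*}

def dot2 [Fintype ι] (A B : ι → ι → ℝ) : ℝ := ∑ i, ∑ j, A i j * B i j

def dot4 [Fintype ι] (A B : ι → ι → ι → ι → ℝ) : ℝ :=
  ∑ i, ∑ j, ∑ k, ∑ l, A i j k l * B i j k l

def trace12 [Fintype ι] (T : ι → ι → ι → ι → ℝ) (k l : ι) : ℝ := ∑ i, T i i k l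

def trace13 [Fintype ι] (T : ι → ι → ι → ι → ℝ) (j l : ι) : ℝ := ∑ i, T i j i l

/-- The total symmetrization `E^s`, for tensors with the minor and major symmetries. -/
def symPart (E : ι → ι → ι → ι → ℝ) (i j k l : ι) : ℝ :=
  (E i j k l + E i k j l + E i l j k) / 3

/-- The symmetrized tensor product `A ⊙ B`. -/
def symProd (A B : ι → ι → ℝ) : ι → ι → ι → ι → ℝ :=
  symPart fun i j k l => (A i j * B k l + B i j * A k l) / 2

def elasticAverage (F : ι → ι → ι → ι → ℝ) (i j k l : ι) : ℝ :=
  (F i j k l + F j i k l + F i j l k + F j i l k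
    + F k l i j + F l k i j + F k l j i + F l k j i) / 8

structure IsElasticityTensor (E : ι → ι → ι → ι → ℝ) : Prop where
  swap_left : ∀ i j k l, E j i k l = E i j k l
  swap_right : ∀ i j k l, E i j l k = E i j k l
  swap_pairs : ∀ i j k l, E k l i j = E i j k l

structure IsTotallySymmetric (T : ι → ι → ι → ι → ℝ) : Prop where
  swap_left : ∀ i j k l, T j i k l = T i j k l
  swap_middle : ∀ i j k l, T i k j l = T i j k l
  swap_right : ∀ i j k l, T i j l k = T i j k l

section Symmetries

variable {E S T : ι → ι → ι → ι → ℝ}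

theorem IsTotallySymmetric.isElasticityTensor (hT : IsTotallySymmetric T) :
    IsElasticityTensor T where
  swap_left := hT.swap_left
  swap_right := hT.swap_right
  swap_pairs i j k l := by
    rw [hT.swap_middle, hT.swap_left, hT.swap_right, hT.swap_middle]

theorem IsTotallySymmetric.sub (hS : IsTotallySymmetric S) (hT : IsTotallySymmetric T) :
    IsTotallySymmetric (S - T) where
  swap_left i j k l := by simp only [Pi.sub_apply, hS.swap_left, hT.swap_left]
  swap_middle i j k l := by simp only [Pi.sub_apply, hS.swap_middle, hT.swap_middle]
  swap_right i j k l := by simp only [Pi.sub_apply, hS.swap_right, hT.swap_right]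

theorem IsTotallySymmetric.smul (c : ℝ) (hT : IsTotallySymmetric T) :
    IsTotallySymmetric (c • T) where
  swap_left i j k l := by simp only [Pi.smul_apply, hT.swap_left]
  swap_middle i j k l := by simp only [Pi.smul_apply, hT.swap_middle]
  swap_right i j k l := by simp only [Pi.smul_apply, hT.swap_right]

theorem IsElasticityTensor.isTotallySymmetric_symPart (hE : IsElasticityTensor E) :
    IsTotallySymmetric (symPart E) where
  swap_left i j k l := by
    simp only [symPart]
    rw [hE.swap_left i j k l, hE.swap_pairs i l j k, hE.swap_pairs i k j l]
    ring
  swap_middle i j k l := by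
    simp only [symPart]
    rw [hE.swap_right i l j k]
    ring
  swap_right i j k l := by
    simp only [symPart]
    rw [hE.swap_right i j k l]
    ring

theorem isElasticityTensor_symOuter {A B : ι → ι → ℝ} (hA : Matrix.IsSymm (A : Matrix ι ι ℝ))
    (hB : Matrix.IsSymm (B : Matrix ι ι ℝ)) :
    IsElasticityTensor fun i j k l => (A i j * B k l + B i j * A k l) / 2 where
  swap_left i j k l := by simp only [hA.apply, hB.apply]
  swap_right i j k l := by simp only [hA.apply, hB.apply]
  swap_pairs i j k l := by ring

theorem isTotallySymmetric_symProd {A B : ι → ι → ℝ} (hA : Matrix.IsSymm (A : Matrix ι ι ℝ))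
    (hB : Matrix.IsSymm (B : Matrix ι ι ℝ)) :
    IsTotallySymmetric (symProd A B) :=
  (isElasticityTensor_symOuter hA hB).isTotallySymmetric_symPart

theorem IsElasticityTensor.elasticAverage_eq (hE : IsElasticityTensor E) :
    elasticAverage E = E := by
  funext i j k l
  simp only [elasticAverage, hE.swap_left, hE.swap_right, hE.swap_pairs]
  ring

end Symmetries

section Dot4

variable [Fintype ι] (A B C : ι → ι → ι → ι → ℝ)

theorem dot4_comm : dot4 A B = dot4 B A := by
  simp only [dot4, mul_comm]

theorem dot4_add_left : dot4 (A + B) C = dot4 A C + dot4 B C := by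
  simp only [dot4, Pi.add_apply, add_mul, sum_add_distrib]

theorem dot4_add_right : dot4 A (B + C) = dot4 A B + dot4 A C := by
  simp only [dot4, Pi.add_apply, mul_add, sum_add_distrib]

theorem dot4_sub_right : dot4 A (B - C) = dot4 A B - dot4 A C := by
  simp only [dot4, Pi.sub_apply, mul_sub, sum_sub_distrib]

theorem dot4_smul_left (c : ℝ) : dot4 (c • A) B = c * dot4 A B := by
  simp only [dot4, Pi.smul_apply, smul_eq_mul, mul_assoc, mul_sum]

theorem dot4_smul_right (c : ℝ) : dot4 A (c • B) = c * dot4 A B := by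
  rw [dot4_comm, dot4_smul_left, dot4_comm]

theorem dot4_add_self_of_dot4_eq_zero (h : dot4 A B = 0) :
    dot4 (A + B) (A + B) = dot4 A A + dot4 B B := by
  rw [dot4_add_left, dot4_add_right, dot4_add_right, dot4_comm B A, h]
  ring

theorem dot4_add_add_self_of_dot4_eq_zero (hAB : dot4 A B = 0) (hAC : dot4 A C = 0)
    (hBC : dot4 B C = 0) :
    dot4 (A + B + C) (A + B + C) = dot4 A A + dot4 B B + dot4 C C := by
  rw [dot4_add_self_of_dot4_eq_zero _ _ (by rw [dot4_add_left, hAC, hBC, add_zero]),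
    dot4_add_self_of_dot4_eq_zero _ _ hAB]

end Dot4

section Dot2

variable [Fintype ι]

theorem dot2_smul_left (c : ℝ) (A B : ι → ι → ℝ) : dot2 (c • A) B = c * dot2 A B := by
  simp only [dot2, Pi.smul_apply, smul_eq_mul, mul_assoc, mul_sum]

theorem dot2_zero_left (A : ι → ι → ℝ) : dot2 0 A = 0 := by
  simp only [dot2, Pi.zero_apply, zero_mul, sum_const_zero]

end Dot2

section Traces

variable [Fintype ι] {E T : ι → ι → ι → ι → ℝ}

theorem IsTotallySymmetric.dot4_symPart (hT : IsTotallySymmetric T) (E : ι → ι → ι → ι → ℝ) :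
    dot4 T (symPart E) = dot4 T E := by
  have h₁ : ∑ i, ∑ j, ∑ k, ∑ l, T i j k l * E i k j l = dot4 T E := by
    refine sum_congr rfl fun i _ => ?_
    rw [sum_comm]
    refine sum_congr rfl fun j _ => sum_congr rfl fun k _ => sum_congr rfl fun l _ => ?_
    rw [hT.swap_middle]
  have h₂ : ∑ i, ∑ j, ∑ k, ∑ l, T i j k l * E i l j k = dot4 T E := by
    refine sum_congr rfl fun i _ => ?_
    rw [sum_congr rfl fun j _ => sum_comm, sum_comm]
    refine sum_congr rfl fun j _ => sum_congr rfl fun k _ => sum_congr rfl fun l _ => ?_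
    rw [hT.swap_right i k j l, hT.swap_middle i j k l]
  calc dot4 T (symPart E)
      = (dot4 T E + ∑ i, ∑ j, ∑ k, ∑ l, T i j k l * E i k j l
          + ∑ i, ∑ j, ∑ k, ∑ l, T i j k l * E i l j k) / 3 := by
        simp only [dot4, symPart, mul_div_assoc', mul_add, add_div, sum_add_distrib, sum_div]
    _ = dot4 T E := by rw [h₁, h₂]; ring

theorem IsElasticityTensor.dot4_self_eq_symPart_add (hE : IsElasticityTensor E) :
    dot4 E E = dot4 (symPart E) (symPart E) + dot4 (E - symPart E) (E - symPart E) := by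
  have h : dot4 (symPart E) (E - symPart E) = 0 := by
    rw [dot4_sub_right, hE.isTotallySymmetric_symPart.dot4_symPart, sub_self]
  rw [← dot4_add_self_of_dot4_eq_zero _ _ h, add_sub_cancel]

theorem IsElasticityTensor.trace12_symPart (hE : IsElasticityTensor E) (k l : ι) :
    trace12 (symPart E) k l = (trace12 E k l + 2 * trace13 E k l) / 3 := by
  have h : ∑ i, E i l i k = trace13 E k l := sum_congr rfl fun i _ => hE.swap_pairs i k i l
  simp only [trace12, symPart, ← sum_div, sum_add_distrib, h]
  rw [trace13]
  ring

theorem trace12_sub (S T : ι → ι → ι → ι → ℝ) : trace12 (S - T) = trace12 S - trace12 T := by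
  funext k l
  simp only [trace12, Pi.sub_apply, sum_sub_distrib]

theorem trace12_smul (c : ℝ) (T : ι → ι → ι → ι → ℝ) : trace12 (c • T) = c • trace12 T := by
  funext k l
  simp only [trace12, Pi.smul_apply, smul_eq_mul, mul_sum]

theorem IsTotallySymmetric.trace12_isSymm (hT : IsTotallySymmetric T) :
    Matrix.IsSymm (trace12 T : Matrix ι ι ℝ) :=
  Matrix.IsSymm.ext fun k l => sum_congr rfl fun i _ => hT.swap_right i i k l

end Traces

def dev (A : Fin 3 → Fin 3 → ℝ) (i j : Fin 3) : ℝ := A i j - (∑ k, A k k) / 3 * kd i j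

/-- For `S = E^s` one has `tr₁₂ S = (d + 2v) / 3`, and this is the harmonic part `H` of `E`. -/
def harmonicPart (S : Fin 3 → Fin 3 → Fin 3 → Fin 3 → ℝ) : Fin 3 → Fin 3 → Fin 3 → Fin 3 → ℝ :=
  S - ((∑ i, trace12 S i i) / 5) • symProd kd kd - (6 / 7 : ℝ) • symProd kd (dev (trace12 S))

theorem isSymm_kd : Matrix.IsSymm (kd : Matrix (Fin 3) (Fin 3) ℝ) :=
  Matrix.IsSymm.ext fun i j => by simp only [kd, eq_comm]

theorem trace_kd : ∑ i, kd i i = 3 := by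
  simp [kd]

theorem dot2_kd (A : Fin 3 → Fin 3 → ℝ) : dot2 kd A = ∑ i, A i i := by
  simp [dot2, kd]

theorem trace_dev (A : Fin 3 → Fin 3 → ℝ) : ∑ i, dev A i i = 0 := by
  simp only [dev, sum_sub_distrib, ← mul_sum, trace_kd]
  ring

theorem isSymm_dev {A : Fin 3 → Fin 3 → ℝ} (hA : Matrix.IsSymm (A : Matrix (Fin 3) (Fin 3) ℝ)) :
    Matrix.IsSymm (dev A : Matrix (Fin 3) (Fin 3) ℝ) :=
  Matrix.IsSymm.ext fun i j => by simp only [dev, hA.apply, isSymm_kd.apply]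

theorem trace12_symProd_kd {A : Fin 3 → Fin 3 → ℝ}
    (hA : Matrix.IsSymm (A : Matrix (Fin 3) (Fin 3) ℝ)) (k l : Fin 3) :
    trace12 (symProd kd A) k l = (7 * A k l + (∑ i, A i i) * kd k l) / 6 := by
  simp only [trace12, symProd, symPart, kd, ↓reduceIte, one_mul, mul_ite, mul_one, mul_zero,
    hA.apply, ite_mul, zero_mul, ← sum_div, sum_add_distrib, sum_const, card_univ,
    Fintype.card_fin, nsmul_eq_mul, Nat.cast_ofNat, sum_ite_irrel, sum_ite_eq',
    mem_univ, add_self_div_two]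
  ring

theorem trace12_symProd_kd_kd : trace12 (symProd kd kd) = (5 / 3 : ℝ) • kd := by
  funext k l
  rw [trace12_symProd_kd isSymm_kd, trace_kd]
  simp only [Pi.smul_apply, smul_eq_mul]
  ring

theorem trace12_symProd_kd_of_trace_eq_zero {A : Fin 3 → Fin 3 → ℝ}
    (hA : Matrix.IsSymm (A : Matrix (Fin 3) (Fin 3) ℝ)) (h : ∑ i, A i i = 0) :
    trace12 (symProd kd A) = (7 / 6 : ℝ) • A := by
  funext k l
  rw [trace12_symProd_kd hA, h]
  simp only [Pi.smul_apply, smul_eq_mul]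
  ring

theorem IsTotallySymmetric.dot4_symProd_kd {T : Fin 3 → Fin 3 → Fin 3 → Fin 3 → ℝ}
    (hT : IsTotallySymmetric T) (A : Fin 3 → Fin 3 → ℝ) :
    dot4 T (symProd kd A) = dot2 (trace12 T) A := by
  have h₁ : ∑ i, ∑ j, ∑ k, ∑ l, T i j k l * (kd i j * A k l) = dot2 (trace12 T) A := by
    simp only [kd, ite_mul, one_mul, zero_mul, mul_ite, mul_zero, sum_ite_irrel, sum_const_zero,
      sum_ite_eq, mem_univ, ↓reduceIte, dot2, trace12, sum_mul]
    exact sum_comm.trans (sum_congr rfl fun _ _ => sum_comm)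
  have h₂ : ∑ i, ∑ j, ∑ k, ∑ l, T i j k l * (A i j * kd k l) = dot2 (trace12 T) A := by
    simp only [kd, mul_ite, mul_one, mul_zero, sum_ite_eq, mem_univ, ↓reduceIte, dot2, trace12,
      sum_mul]
    refine sum_congr rfl fun i _ => sum_congr rfl fun j _ => sum_congr rfl fun k _ => ?_
    rw [hT.isElasticityTensor.swap_pairs k k i j]
  rw [symProd, hT.dot4_symPart]
  calc dot4 T (fun i j k l => (kd i j * A k l + A i j * kd k l) / 2)
      = (∑ i, ∑ j, ∑ k, ∑ l, T i j k l * (kd i j * A k l)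
          + ∑ i, ∑ j, ∑ k, ∑ l, T i j k l * (A i j * kd k l)) / 2 := by
        simp only [dot4, mul_div_assoc', mul_add, add_div, sum_add_distrib, sum_div]
    _ = dot2 (trace12 T) A := by rw [h₁, h₂]; ring

section Harmonic

variable {S : Fin 3 → Fin 3 → Fin 3 → Fin 3 → ℝ}

theorem IsTotallySymmetric.isTotallySymmetric_harmonicPart (hS : IsTotallySymmetric S) :
    IsTotallySymmetric (harmonicPart S) :=
  (hS.sub ((isTotallySymmetric_symProd isSymm_kd isSymm_kd).smul _)).sub
    ((isTotallySymmetric_symProd isSymm_kd (isSymm_dev hS.trace12_isSymm)).smul _)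

theorem IsTotallySymmetric.trace12_harmonicPart (hS : IsTotallySymmetric S) :
    trace12 (harmonicPart S) = 0 := by
  funext k l
  simp only [harmonicPart, trace12_sub, trace12_smul, trace12_symProd_kd_kd,
    trace12_symProd_kd_of_trace_eq_zero (isSymm_dev hS.trace12_isSymm) (trace_dev _),
    Pi.sub_apply, Pi.smul_apply, smul_eq_mul, Pi.zero_apply]
  rw [dev]
  ring

theorem IsTotallySymmetric.dot4_self_eq_harmonic (hS : IsTotallySymmetric S) :
    dot4 S S = (∑ i, trace12 S i i) ^ 2 / 5 + 6 / 7 * dot2 (dev (trace12 S)) (dev (trace12 S))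
      + dot4 (harmonicPart S) (harmonicPart S) := by
  set τ := ∑ i, trace12 S i i
  set D := dev (trace12 S)
  have hD : Matrix.IsSymm (D : Matrix (Fin 3) (Fin 3) ℝ) := isSymm_dev hS.trace12_isSymm
  have hJ := isTotallySymmetric_symProd isSymm_kd isSymm_kd
  have hK := isTotallySymmetric_symProd isSymm_kd hD
  have hH := hS.isTotallySymmetric_harmonicPart
  have trK := trace12_symProd_kd_of_trace_eq_zero hD (trace_dev _)
  have hS_eq : S = (τ / 5) • symProd kd kd + (6 / 7 : ℝ) • symProd kd D + harmonicPart S := by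
    simp only [harmonicPart]
    abel
  conv_lhs => rw [hS_eq]
  rw [dot4_add_add_self_of_dot4_eq_zero]
  · simp only [dot4_smul_left, dot4_smul_right, hJ.dot4_symProd_kd, hK.dot4_symProd_kd,
      trace12_symProd_kd_kd, trK, dot2_smul_left, dot2_kd, trace_kd]
    ring
  · rw [dot4_smul_left, dot4_smul_right, hJ.dot4_symProd_kd, trace12_symProd_kd_kd,
      dot2_smul_left, dot2_kd, trace_dev, mul_zero, mul_zero, mul_zero]
  · rw [dot4_smul_left, dot4_comm, hH.dot4_symProd_kd, hS.trace12_harmonicPart, dot2_zero_left,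
      mul_zero]
  · rw [dot4_smul_left, dot4_comm, hH.dot4_symProd_kd, hS.trace12_harmonicPart, dot2_zero_left,
      mul_zero]

end Harmonic

/-- Specific to dimension 3. Replacing `E` by its average over the index symmetries turns both
sides into polynomials in 81 free entries, so the identity is a ring identity. -/
theorem IsElasticityTensor.dot4_sub_symPart_self {E : Fin 3 → Fin 3 → Fin 3 → Fin 3 → ℝ}
    (hE : IsElasticityTensor E) :
    dot4 (E - symPart E) (E - symPart E) =
      4 / 3 * dot2 (dev (trace12 E - trace13 E)) (dev (trace12 E - trace13 E))
        + (∑ i, (trace12 E i i - trace13 E i i)) ^ 2 / 9 := by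
  rw [← hE.elasticAverage_eq]
  simp only [dot4, dot2, dev, trace12, trace13, symPart, elasticAverage, kd, Fin.sum_univ_three,
    Pi.sub_apply, Fin.isValue, Fin.reduceEq, ↓reduceIte, mul_one, mul_zero, sub_zero]
  ring

end HarmonicDecomposition

end

open HarmonicDecomposition

/-- For an elasticity tensor `E` with harmonic decomposition
`E = (λ, μ, d', v', H)`, the squared Euclidean norm decomposes as
`‖E‖² = 3(3λ² + 4λμ + 8μ²) + (2/21)‖d' + 2v'‖² + (4/3)‖d' − v'‖² + ‖H‖²`. -/
theorem norm_sq_harmonic_decomposition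
    (E : Fin 3 → Fin 3 → Fin 3 → Fin 3 → ℝ)
    (hminor : ∀ i j k l, E i j k l = E j i k l ∧ E i j k l = E i j l k)
    (hmajor : ∀ i j k l, E i j k l = E k l i j)
    (d v : Fin 3 → Fin 3 → ℝ)
    (hd : ∀ k l, d k l = ∑ i : Fin 3, E i i k l)
    (hv : ∀ j l, v j l = ∑ i : Fin 3, E i j i l)
    (lam mu : ℝ)
    (hlam : lam = (2 * (∑ i : Fin 3, d i i) - (∑ i : Fin 3, v i i)) / 15)
    (hmu : mu = (3 * (∑ i : Fin 3, v i i) - (∑ i : Fin 3, d i i)) / 30)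
    (dp vp : Fin 3 → Fin 3 → ℝ)
    (hdp : ∀ i j, dp i j = d i j - (∑ k : Fin 3, d k k) / 3 * kd i j)
    (hvp : ∀ i j, vp i j = v i j - (∑ k : Fin 3, v k k) / 3 * kd i j)
    (Es H : Fin 3 → Fin 3 → Fin 3 → Fin 3 → ℝ)
    (hEs : ∀ i j k l, Es i j k l = (E i j k l + E i k j l + E i l j k) / 3)
    (hH : ∀ i j k l, H i j k l =
      Es i j k l
      - (2 * mu + lam) * ((kd i j * kd k l + kd i k * kd j l + kd i l * kd j k) / 3)
      - (2 / 7) * ((kd i j * (dp k l + 2 * vp k l) + kd i k * (dp j l + 2 * vp j l)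
          + kd i l * (dp j k + 2 * vp j k) + kd k l * (dp i j + 2 * vp i j)
          + kd j l * (dp i k + 2 * vp i k) + kd j k * (dp i l + 2 * vp i l)) / 6)) :
    (∑ i : Fin 3, ∑ j : Fin 3, ∑ k : Fin 3, ∑ l : Fin 3, E i j k l * E i j k l)
      = 3 * (3 * lam ^ 2 + 4 * lam * mu + 8 * mu ^ 2)
        + (2 / 21) * (∑ i : Fin 3, ∑ j : Fin 3, (dp i j + 2 * vp i j) ^ 2)
        + (4 / 3) * (∑ i : Fin 3, ∑ j : Fin 3, (dp i j - vp i j) ^ 2)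
        + (∑ i : Fin 3, ∑ j : Fin 3, ∑ k : Fin 3, ∑ l : Fin 3,
            H i j k l * H i j k l) := by
  have hE : IsElasticityTensor E :=
    ⟨fun i j k l => (hminor i j k l).1.symm, fun i j k l => (hminor i j k l).2.symm,
      fun i j k l => (hmajor i j k l).symm⟩
  obtain rfl : d = trace12 E := funext₂ hd
  obtain rfl : v = trace13 E := funext₂ hv
  obtain rfl : Es = symPart E := by funext i j k l; exact hEs i j k l
  subst hlam hmu
  have ht := hE.trace12_symPart
  have hτ : ∑ i, trace12 (symPart E) i i = (∑ i, trace12 E i i + 2 * ∑ i, trace13 E i i) / 3 := by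
    simp only [ht, ← sum_div, sum_add_distrib, ← mul_sum]
  have hdev_sum : dev (trace12 (symPart E)) = fun i j => (dp i j + 2 * vp i j) / 3 := by
    funext i j
    rw [hdp, hvp, dev, ht, hτ]
    ring
  have hdev_diff : dev (trace12 E - trace13 E) = fun i j => dp i j - vp i j := by
    funext i j
    simp only [dev, hdp, hvp, Pi.sub_apply, sum_sub_distrib]
    ring
  have hH_eq : H = harmonicPart (symPart E) := by
    funext i j k l
    rw [hH]
    simp only [harmonicPart, hτ, hdev_sum, symProd, symPart, Pi.sub_apply, Pi.smul_apply,
      smul_eq_mul]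
    ring
  change dot4 E E = _
  rw [hE.dot4_self_eq_symPart_add, hE.isTotallySymmetric_symPart.dot4_self_eq_harmonic,
    hE.dot4_sub_symPart_self, ← hH_eq, hτ, hdev_sum, hdev_diff]
  simp only [dot2, dot4, div_mul_div_comm, ← sum_div, sq, sum_sub_distrib]
  ring
end
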